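/- Fix real numbers c and d and an integer L ≥ 1. For spins s : ZMod L → {−1, +1}, with bond weight w(s,s′) = 1 if s = s′ and c otherwise, and site weight m(+1) = 1 and m(−1) = d, the periodic-boundary Ising partition function in an external field satisfies ∑_{s : ZMod L → {±1}} (∏_{i} w(s_i, s_{i+1})) · (∏_{i} m(s_i)) = λ₁^L + λ₂^L, where λ₁ = (1 + d + ζ)/2, λ₂ = (1 + d − ζ)/2, and ζ = √(4 d c² + d² − 2d + 1) (assume 4dc² + d² − 2d + 1 ≥ 0). With c = e^{−ε·α(t)} and d = e^{−b·α(t)} this is the infinite-q spectral form factor of the global-TRS random phase model with TRS-breaking strength b and periodic boundary conditions. -/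
import Mathlib

open BigOperators

private lemma path_sum (A : Matrix Bool Bool ℝ) :
    ∀ (n : ℕ) (g : Bool → Bool → ℝ),
      (∑ s : Fin (n+1) → Bool,
          g (s 0) (s (Fin.last n)) * ∏ j : Fin n, A (s j.castSucc) (s j.succ))
        = ∑ a : Bool, ∑ b : Bool, g a b * (A ^ n) a b := by
  intro n
  induction n with
  | zero =>
      intro g
      rw [← Equiv.sum_comp (Equiv.funUnique (Fin 1) Bool).symm]
      simp [Matrix.one_apply]
  | succ n ih =>
      intro g
      rw [← Equiv.sum_comp (Fin.consEquiv (fun _ : Fin (n+2) => Bool)), Fintype.sum_prod_type]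
      have hstep : ∀ a : Bool,
          (∑ v : Fin (n+1) → Bool,
            g ((Fin.cons a v : Fin (n+2) → Bool) 0)
              ((Fin.cons a v : Fin (n+2) → Bool) (Fin.last (n+1))) *
              ∏ j : Fin (n+1), A ((Fin.cons a v : Fin (n+2) → Bool) j.castSucc)
                ((Fin.cons a v : Fin (n+2) → Bool) j.succ))
          = ∑ b : Bool, g a b * (A ^ (n+1)) a b := by
        intro a
        have hv : ∀ v : Fin (n+1) → Bool,
            g ((Fin.cons a v : Fin (n+2) → Bool) 0)
              ((Fin.cons a v : Fin (n+2) → Bool) (Fin.last (n+1))) *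
              ∏ j : Fin (n+1), A ((Fin.cons a v : Fin (n+2) → Bool) j.castSucc)
                ((Fin.cons a v : Fin (n+2) → Bool) j.succ)
            = (fun x y => g a y * A a x) (v 0) (v (Fin.last n)) *
                ∏ j : Fin n, A (v j.castSucc) (v j.succ) := by
          intro v
          rw [Fin.prod_univ_succ]
          rw [← Fin.succ_last]
          simp only [Fin.cons_zero, Fin.cons_succ, Fin.castSucc_zero]
          have : ∀ j : Fin n,
              A ((Fin.cons a v : Fin (n+2) → Bool) j.succ.castSucc) (v j.succ)
              = A (v j.castSucc) (v j.succ) := by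
            intro j
            rw [← Fin.succ_castSucc, Fin.cons_succ]
          rw [Finset.prod_congr rfl (fun j _ => this j)]
          ring
        rw [Finset.sum_congr rfl (fun v _ => hv v), ih (fun x y => g a y * A a x)]
        rw [Finset.sum_comm]
        refine Finset.sum_congr rfl (fun b _ => ?_)
        rw [pow_succ', Matrix.mul_apply, Finset.mul_sum]
        refine Finset.sum_congr rfl (fun x _ => ?_)
        ring
      simp only [Fin.consEquiv_apply]
      rw [Finset.sum_congr rfl (fun a _ => hstep a)]

private lemma cycle_sum (A : Matrix Bool Bool ℝ) (n : ℕ) :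
    (∑ s : Fin (n+1) → Bool, ∏ i : Fin (n+1), A (s i) (s (i+1)))
      = (A ^ (n+1)).trace := by
  have h1 : ∀ s : Fin (n+1) → Bool,
      (∏ i : Fin (n+1), A (s i) (s (i+1)))
      = (fun x y => A y x) (s 0) (s (Fin.last n)) *
          ∏ j : Fin n, A (s j.castSucc) (s j.succ) := by
    intro s
    rw [Fin.prod_univ_castSucc]
    have h2 : ∀ j : Fin n, A (s j.castSucc) (s (j.castSucc + 1))
        = A (s j.castSucc) (s j.succ) := by
      intro j; rw [Fin.coeSucc_eq_succ]
    rw [Finset.prod_congr rfl (fun j _ => h2 j), Fin.last_add_one]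
    ring
  rw [Finset.sum_congr rfl (fun s _ => h1 s), path_sum A n (fun x y => A y x)]
  rw [pow_succ, Matrix.trace]
  refine Finset.sum_congr rfl (fun a _ => ?_)
  rw [Matrix.diag_apply, Matrix.mul_apply]
  refine Finset.sum_congr rfl (fun b _ => ?_)
  ring

private lemma trace_pow_closed (A : Matrix Bool Bool ℝ) (l1 l2 : ℝ)
    (htr : A.trace = l1 + l2)
    (hCH : A ^ 2 = (l1 + l2) • A - (l1 * l2) • (1 : Matrix Bool Bool ℝ)) :
    ∀ m : ℕ, (A ^ m).trace = l1 ^ m + l2 ^ m := by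
  have key : ∀ m : ℕ, (A ^ m).trace = l1 ^ m + l2 ^ m ∧
      (A ^ (m+1)).trace = l1 ^ (m+1) + l2 ^ (m+1) := by
    intro m
    induction m with
    | zero =>
        constructor
        · simp [Matrix.trace_one]; norm_num
        · simpa using htr
    | succ m ih =>
        refine ⟨ih.2, ?_⟩
        have h2 : A ^ (m + 2) = A ^ m * A ^ 2 := by
          rw [← pow_add]
        rw [h2, hCH, mul_sub, Matrix.trace_sub, mul_smul_comm, mul_smul_comm,
          Matrix.trace_smul, Matrix.trace_smul, mul_one, ← pow_succ, smul_eq_mul, smul_eq_mul,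
          ih.1, ih.2]
        ring
  exact fun m => (key m).1

theorem ising_partition_global_trs_breaking (c d : ℝ) (L : ℕ) [NeZero L]
    (hnn : 0 ≤ 4 * d * c ^ 2 + d ^ 2 - 2 * d + 1) :
    (∑ s : ZMod L → Bool,
        (∏ i : ZMod L, (if s i = s (i + 1) then (1 : ℝ) else c)) *
          ∏ i : ZMod L, (if s i then (1 : ℝ) else d))
      = ((1 + d + Real.sqrt (4 * d * c ^ 2 + d ^ 2 - 2 * d + 1)) / 2) ^ L
        + ((1 + d - Real.sqrt (4 * d * c ^ 2 + d ^ 2 - 2 * d + 1)) / 2) ^ L := by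
  obtain ⟨n, rfl⟩ : ∃ n, L = n + 1 :=
    ⟨L - 1, (Nat.succ_pred_eq_of_pos (Nat.pos_of_ne_zero (NeZero.ne L))).symm⟩
  set ζ : ℝ := Real.sqrt (4 * d * c ^ 2 + d ^ 2 - 2 * d + 1) with hζ
  set A : Matrix Bool Bool ℝ :=
    Matrix.of (fun a b => (if a = b then (1 : ℝ) else c) * (if b then (1 : ℝ) else d)) with hA
  set l1 : ℝ := (1 + d + ζ) / 2 with hl1
  set l2 : ℝ := (1 + d - ζ) / 2 with hl2
  have hζ2 : ζ ^ 2 = 4 * d * c ^ 2 + d ^ 2 - 2 * d + 1 := Real.sq_sqrt hnn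
  have hsum : l1 + l2 = 1 + d := by rw [hl1, hl2]; ring
  have hprod : l1 * l2 = d - d * c ^ 2 := by
    have h : l1 * l2 = ((1 + d) ^ 2 - ζ ^ 2) / 4 := by rw [hl1, hl2]; ring
    rw [h, hζ2]; ring
  -- summand rewrite
  have hsummand : ∀ s : ZMod (n+1) → Bool,
      (∏ i : ZMod (n+1), (if s i = s (i + 1) then (1 : ℝ) else c)) *
        ∏ i : ZMod (n+1), (if s i then (1 : ℝ) else d)
      = ∏ i : ZMod (n+1), A (s i) (s (i + 1)) := by
    intro s
    have hm : (∏ i : ZMod (n+1), (if s (i + 1) then (1 : ℝ) else d))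
        = ∏ i : ZMod (n+1), (if s i then (1 : ℝ) else d) :=
      Fintype.prod_equiv (Equiv.addRight (1 : ZMod (n+1))) _ _ (fun i => rfl)
    rw [← hm, ← Finset.prod_mul_distrib]
    rfl
  rw [Finset.sum_congr rfl (fun s _ => hsummand s)]
  have hcycle : (∑ s : ZMod (n+1) → Bool, ∏ i : ZMod (n+1), A (s i) (s (i + 1)))
      = (A ^ (n+1)).trace := cycle_sum A n
  rw [hcycle]
  have htr : A.trace = l1 + l2 := by
    rw [hsum, Matrix.trace, Fintype.sum_bool]
    simp [hA]
  have hCH : A ^ 2 = (l1 + l2) • A - (l1 * l2) • (1 : Matrix Bool Bool ℝ) := by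
    rw [hsum, hprod]
    ext a b
    fin_cases a <;> fin_cases b <;>
      simp [pow_two, Matrix.mul_apply, Fintype.sum_bool, Matrix.one_apply, hA] <;> ring
  exact trace_pow_closed A l1 l2 htr hCH (n+1)
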